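/- arXiv:2206.02951 — 3 statements merged into one kernel-verified Lean document; each statement's English description precedes it below -/
import Mathlib

section
/- Let B ∈ R^{m×m} be nonsingular with positive definite symmetric part H = (B + B^T)/2 and skew-symmetric part K = (B − B^T)/2, and suppose λ_min(H) > ρ(K), where ρ(K) is the spectral radius of K. Then for every nonzero v ∈ R^m, (v^T B^T B v)/(v^T H v) ≥ λ_min(H) − ρ(K)^2/λ_min(H) > 0. -/
/-!
Let `λ = λ_min(H)` and `ρ = ρ(K)`. Cauchy–Schwarz together with `λ‖v‖² ≤ vᵀHv` gives
`vᵀH²v = ‖Hv‖² ≥ λ vᵀHv`. Since `K` is skew, `-K² = KᵀK` is symmetric, and by spectral mapping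
each of its eigenvalues is `-z²` for a complex eigenvalue `z` of `K`; hence
`vᵀK²v ≥ -ρ²‖v‖² ≥ -(ρ²/λ) vᵀHv`. Adding the two bounds and dividing by `vᵀHv > 0` gives the
inequality, and `0 ≤ ρ < λ` gives `λ - ρ²/λ > 0`.
-/

open Matrix

/-- Smallest eigenvalue of a real symmetric matrix. -/
noncomputable def lamMin {m : ℕ} {M : Matrix (Fin m) (Fin m) ℝ}
    (hM : M.IsHermitian) : ℝ := ⨅ i, hM.eigenvalues i

/-- Spectral radius of a real matrix: the largest modulus of its complex
eigenvalues. -/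
noncomputable def specRad {m : ℕ} (M : Matrix (Fin m) (Fin m) ℝ) : ℝ :=
  sSup ((fun z : ℂ => ‖z‖) '' spectrum ℂ (M.map (Complex.ofReal)))

namespace Matrix

theorem transpose_smul_sub_transpose {n R : Type*} [Ring R] (a : R) (B : Matrix n n R) :
    (a • (B - Bᵀ))ᵀ = -(a • (B - Bᵀ)) := by
  rw [transpose_smul, transpose_sub, transpose_transpose, ← smul_neg, neg_sub]

variable {n : Type*} [Fintype n]

theorem dotProduct_sq_le (v w : n → ℝ) : (v ⬝ᵥ w) ^ 2 ≤ (v ⬝ᵥ v) * (w ⬝ᵥ w) := by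
  simpa only [dotProduct, ← sq] using Finset.sum_mul_sq_le_sq_mul_sq Finset.univ v w

theorem IsHermitian.dotProduct_mul_self_mulVec {A : Matrix n n ℝ} (hA : A.IsHermitian)
    (v : n → ℝ) : v ⬝ᵥ (A * A) *ᵥ v = A *ᵥ v ⬝ᵥ A *ᵥ v := by
  rw [← mulVec_mulVec, dotProduct_mulVec, ← mulVec_transpose,
    ← conjTranspose_eq_transpose_of_trivial, hA.eq]

theorem IsHermitian.mul_dotProduct_mulVec_le_dotProduct_mul_self_mulVec {A : Matrix n n ℝ}
    (hA : A.IsHermitian) {c : ℝ} (hc : 0 ≤ c) {v : n → ℝ}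
    (hv : c * (v ⬝ᵥ v) ≤ v ⬝ᵥ A *ᵥ v) :
    c * (v ⬝ᵥ A *ᵥ v) ≤ v ⬝ᵥ (A * A) *ᵥ v := by
  rw [hA.dotProduct_mul_self_mulVec]
  have hAv : 0 ≤ A *ᵥ v ⬝ᵥ A *ᵥ v := dotProduct_self_star_nonneg _
  rcases le_or_gt (v ⬝ᵥ A *ᵥ v) 0 with hq | hq
  · exact (mul_nonpos_of_nonneg_of_nonpos hc hq).trans hAv
  refine le_of_mul_le_mul_right ?_ hq
  calc c * (v ⬝ᵥ A *ᵥ v) * (v ⬝ᵥ A *ᵥ v) = c * (v ⬝ᵥ A *ᵥ v) ^ 2 := by ring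
    _ ≤ c * ((v ⬝ᵥ v) * (A *ᵥ v ⬝ᵥ A *ᵥ v)) :=
        mul_le_mul_of_nonneg_left (dotProduct_sq_le v _) hc
    _ = c * (v ⬝ᵥ v) * (A *ᵥ v ⬝ᵥ A *ᵥ v) := by ring
    _ ≤ (v ⬝ᵥ A *ᵥ v) * (A *ᵥ v ⬝ᵥ A *ᵥ v) := mul_le_mul_of_nonneg_right hv hAv
    _ = (A *ᵥ v ⬝ᵥ A *ᵥ v) * (v ⬝ᵥ A *ᵥ v) := mul_comm _ _

open scoped MatrixOrder in
theorem IsHermitian.mul_dotProduct_self_le_dotProduct_mulVec [DecidableEq n]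
    {A : Matrix n n ℝ} (hA : A.IsHermitian) {c : ℝ} (h : ∀ x ∈ spectrum ℝ A, c ≤ x)
    (v : n → ℝ) : c * (v ⬝ᵥ v) ≤ v ⬝ᵥ A *ᵥ v := by
  have hle : algebraMap ℝ (Matrix n n ℝ) c ≤ A :=
    (algebraMap_le_iff_le_spectrum hA.isSelfAdjoint).2 h
  simpa [sub_mulVec, Algebra.algebraMap_eq_smul_one, smul_mulVec] using
    (le_iff.1 hle).dotProduct_mulVec_nonneg v

open scoped MatrixOrder in
theorem IsHermitian.dotProduct_mulVec_le_mul_dotProduct_self [DecidableEq n]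
    {A : Matrix n n ℝ} (hA : A.IsHermitian) {c : ℝ} (h : ∀ x ∈ spectrum ℝ A, x ≤ c)
    (v : n → ℝ) : v ⬝ᵥ A *ᵥ v ≤ c * (v ⬝ᵥ v) := by
  have hle : A ≤ algebraMap ℝ (Matrix n n ℝ) c :=
    (le_algebraMap_iff_spectrum_le hA.isSelfAdjoint).2 h
  simpa [sub_mulVec, Algebra.algebraMap_eq_smul_one, smul_mulVec] using
    (le_iff.1 hle).dotProduct_mulVec_nonneg v

theorem ofReal_mem_spectrum_map_ofReal [DecidableEq n] {M : Matrix n n ℝ} {r : ℝ}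
    (h : r ∈ spectrum ℝ M) : (r : ℂ) ∈ spectrum ℂ (M.map Complex.ofReal) := by
  rw [mem_spectrum_iff_isRoot_charpoly] at h ⊢
  exact (charpoly_map M Complex.ofRealHom).symm ▸ h.map

theorem exists_sq_eq_of_mem_spectrum_mul_self [DecidableEq n] {M : Matrix n n ℝ} {r : ℝ}
    (h : r ∈ spectrum ℝ (M * M)) : ∃ z ∈ spectrum ℂ (M.map Complex.ofReal), z ^ 2 = r := by
  have hmap : (M * M).map Complex.ofReal = M.map Complex.ofReal ^ 2 := by
    rw [sq]
    exact Matrix.map_mul (f := Complex.ofRealHom)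
  have := ofReal_mem_spectrum_map_ofReal h
  rwa [hmap, spectrum.map_pow_of_pos _ two_pos] at this

end Matrix

section

variable {m : ℕ}

theorem lamMin_le {M : Matrix (Fin m) (Fin m) ℝ} (hM : M.IsHermitian) :
    ∀ x ∈ spectrum ℝ M, lamMin hM ≤ x := by
  rw [hM.spectrum_real_eq_range_eigenvalues]
  rintro _ ⟨i, rfl⟩
  exact ciInf_le (Finite.bddBelow_range _) i

theorem specRad_nonneg (M : Matrix (Fin m) (Fin m) ℝ) : 0 ≤ specRad M :=
  Real.sSup_nonneg <| by
    rintro _ ⟨z, -, rfl⟩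
    exact norm_nonneg z

theorem norm_le_specRad {M : Matrix (Fin m) (Fin m) ℝ} {z : ℂ}
    (hz : z ∈ spectrum ℂ (M.map Complex.ofReal)) : ‖z‖ ≤ specRad M :=
  le_csSup ((Matrix.finite_spectrum _).image _).bddAbove ⟨z, hz, rfl⟩

theorem abs_le_specRad_sq_of_mem_spectrum_mul_self {M : Matrix (Fin m) (Fin m) ℝ} {r : ℝ}
    (h : r ∈ spectrum ℝ (M * M)) : |r| ≤ specRad M ^ 2 := by
  obtain ⟨z, hz, hzr⟩ := M.exists_sq_eq_of_mem_spectrum_mul_self h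
  have hr : |r| = ‖z‖ ^ 2 := by rw [← norm_pow, hzr, Complex.norm_real, Real.norm_eq_abs]
  exact hr ▸ pow_le_pow_left₀ (norm_nonneg z) (norm_le_specRad hz) 2

theorem neg_specRad_sq_mul_le_dotProduct_mul_self_mulVec {K : Matrix (Fin m) (Fin m) ℝ}
    (hK : Kᵀ = -K) (v : Fin m → ℝ) : -(specRad K ^ 2 * (v ⬝ᵥ v)) ≤ v ⬝ᵥ (K * K) *ᵥ v := by
  have hherm : (-(K * K)).IsHermitian := by
    rw [IsHermitian, conjTranspose_eq_transpose_of_trivial, transpose_neg, transpose_mul, hK,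
      neg_mul_neg]
  have hspec : ∀ x ∈ spectrum ℝ (-(K * K)), x ≤ specRad K ^ 2 := by
    intro x hx
    rw [← spectrum.neg_eq, Set.mem_neg] at hx
    have hbound := abs_le_specRad_sq_of_mem_spectrum_mul_self hx
    rw [abs_neg] at hbound
    exact (le_abs_self x).trans hbound
  have := hherm.dotProduct_mulVec_le_mul_dotProduct_self hspec v
  rw [neg_mulVec, dotProduct_neg] at this
  linarith

end

theorem swi_key_inequality_general {m : ℕ}
    (B H K : Matrix (Fin m) (Fin m) ℝ)
    (hKdef : K = ((1 : ℝ) / 2) • (B - Bᵀ))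
    (hH : H.PosDef)
    (hgap : specRad K < lamMin hH.1) :
    ∀ v : Fin m → ℝ, v ≠ 0 →
      lamMin hH.1 - specRad K ^ 2 / lamMin hH.1 ≤
          (v ⬝ᵥ (H * H) *ᵥ v + v ⬝ᵥ (K * K) *ᵥ v) / (v ⬝ᵥ H *ᵥ v) ∧
        0 < lamMin hH.1 - specRad K ^ 2 / lamMin hH.1 := by
  intro v hv
  set lam := lamMin hH.1
  set ρ := specRad K
  have hρ : 0 ≤ ρ := specRad_nonneg K
  have hlam : 0 < lam := hρ.trans_lt hgap
  have hvHv : lam * (v ⬝ᵥ v) ≤ v ⬝ᵥ H *ᵥ v :=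
    hH.1.mul_dotProduct_self_le_dotProduct_mulVec (lamMin_le hH.1) v
  have hHH := hH.1.mul_dotProduct_mulVec_le_dotProduct_mul_self_mulVec hlam.le hvHv
  have hKK := neg_specRad_sq_mul_le_dotProduct_mul_self_mulVec
    (hKdef ▸ transpose_smul_sub_transpose _ B) v
  have hvv : ρ ^ 2 * (v ⬝ᵥ v) ≤ ρ ^ 2 / lam * (v ⬝ᵥ H *ᵥ v) := by
    rw [div_mul_eq_mul_div, le_div_iff₀ hlam, mul_assoc, mul_comm (v ⬝ᵥ v)]
    exact mul_le_mul_of_nonneg_left hvHv (sq_nonneg ρ)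
  refine ⟨?_, ?_⟩
  · rw [le_div_iff₀ (by simpa using hH.dotProduct_mulVec_pos hv)]
    linarith
  · rw [sub_pos, div_lt_iff₀ hlam]
    nlinarith

/-- Key inequality for the SWI convergence proof: if `B = H + K` is
nonsingular with symmetric part `H` positive definite, skew-symmetric part `K`,
and `λ_min(H) > ρ(K)`, then for every nonzero `v`,
`(vᵀH²v + vᵀK²v)/(vᵀHv) ≥ λ_min(H) − ρ(K)²/λ_min(H) > 0`. -/
theorem swi_key_inequality {m : ℕ}
    (B H K : Matrix (Fin m) (Fin m) ℝ)
    (hBunit : IsUnit B)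
    (hHdef : H = ((1 : ℝ) / 2) • (B + Bᵀ))
    (hKdef : K = ((1 : ℝ) / 2) • (B - Bᵀ))
    (hH : H.PosDef)
    (hgap : specRad K < lamMin hH.1) :
    ∀ v : Fin m → ℝ, v ≠ 0 →
      lamMin hH.1 - specRad K ^ 2 / lamMin hH.1 ≤
          (v ⬝ᵥ (H * H) *ᵥ v + v ⬝ᵥ (K * K) *ᵥ v) / (v ⬝ᵥ H *ᵥ v) ∧
        0 < lamMin hH.1 - specRad K ^ 2 / lamMin hH.1 :=
  swi_key_inequality_general B H K hKdef hH hgap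
end

section
/- Let A ∈ R^{n×n} be positive definite, r ∈ R^n nonzero, and P ∈ R^{n×k} a matrix with full column rank such that P^T r = 0 and P^T A P is invertible. If (I − P (P^T A P)^{-1} P^T A) r = 0, then r = 0. Equivalently, under these hypotheses r must lie outside the kernel of the oblique projector, so the projected direction p = (I − P (P^T A P)^{-1} P^T A) r is nonzero whenever r ≠ 0. -/
open Matrix

/-- No-breakdown lemma: if `A` is positive definite, `P` has full column rank,
`Pᵀ r = 0` and `PᵀAP` is invertible, then the semi-conjugate direction
`p = (I − P (PᵀAP)⁻¹ PᵀA) r` is nonzero whenever `r ≠ 0`. -/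
theorem no_breakdown {n k : ℕ}
    (A : Matrix (Fin n) (Fin n) ℝ) (P : Matrix (Fin n) (Fin k) ℝ)
    (r : Fin n → ℝ)
    (hA : ∀ x : Fin n → ℝ, x ≠ 0 → 0 < x ⬝ᵥ A *ᵥ x)
    (hP : LinearIndependent ℝ (fun j : Fin k => fun i : Fin n => P i j))
    (hPr : Pᵀ *ᵥ r = 0)
    (hPAP : IsUnit (Pᵀ * A * P))
    (hr : r ≠ 0) :
    r - P *ᵥ ((Pᵀ * A * P)⁻¹ *ᵥ (Pᵀ *ᵥ (A *ᵥ r))) ≠ 0 := by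
  intro h
  set z := (Pᵀ * A * P)⁻¹ *ᵥ (Pᵀ *ᵥ (A *ᵥ r)) with hz
  have hre : r = P *ᵥ z := by
    have := sub_eq_zero.mp h
    exact this
  have hdot : r ⬝ᵥ r = 0 := by
    calc r ⬝ᵥ r = (P *ᵥ z) ⬝ᵥ r := by rw [← hre]
    _ = z ⬝ᵥ (Pᵀ *ᵥ r) := by
        rw [Matrix.mulVec_transpose, dotProduct_comm, Matrix.dotProduct_mulVec,
          dotProduct_comm]
    _ = 0 := by rw [hPr, dotProduct_zero]
  exact hr ((dotProduct_self_eq_zero).mp hdot)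
end

section
/- In the SCG iteration for a positive definite matrix A, assuming all directions p_0, ..., p_{k-1} are nonzero, the matrix L_k = P_k^T Q_k (where P_k = [p_0,...,p_{k-1}], Q_k = [q_0,...,q_{k-1}] = A P_k) is lower triangular with positive diagonal entries, and hence nonsingular. Consequently p_i^T A p_j = 0 for all i < j. -/
open Matrix

/-- The matrix whose columns are `u 0, …, u (k-1)`. -/
def colMat {n : ℕ} (u : ℕ → Fin n → ℝ) (k : ℕ) : Matrix (Fin n) (Fin k) ℝ :=
  Matrix.of fun i (j : Fin k) => u j i

/-- The coefficient vector `λ_k = (P_kᵀ Q_k)⁻¹ P_kᵀ A r_k` used by SCG. -/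
noncomputable def scgLam {n : ℕ} (A : Matrix (Fin n) (Fin n) ℝ)
    (p q r : ℕ → Fin n → ℝ) (k : ℕ) : Fin k → ℝ :=
  ((colMat p k)ᵀ * colMat q k)⁻¹ *ᵥ ((colMat p k)ᵀ *ᵥ (A *ᵥ r k))

lemma colMatT_mulVec {n : ℕ} (u : ℕ → Fin n → ℝ) (k : ℕ) (w : Fin n → ℝ) (i : Fin k) :
    ((colMat u k)ᵀ *ᵥ w) i = u i ⬝ᵥ w := by
  simp [colMat, Matrix.mulVec, dotProduct]

lemma L_entry {n : ℕ} (p q : ℕ → Fin n → ℝ) (k : ℕ) (i j : Fin k) :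
    ((colMat p k)ᵀ * colMat q k) i j = p i ⬝ᵥ q j := by
  simp [colMat, Matrix.mul_apply, dotProduct]

lemma q_eq {n : ℕ} (A : Matrix (Fin n) (Fin n) ℝ) (p q r : ℕ → Fin n → ℝ)
    (hq0 : q 0 = A *ᵥ p 0)
    (hp : ∀ k, p (k + 1) = r (k + 1) - colMat p (k + 1) *ᵥ scgLam A p q r (k + 1))
    (hq : ∀ k, q (k + 1) = A *ᵥ r (k + 1) - colMat q (k + 1) *ᵥ scgLam A p q r (k + 1)) :
    ∀ k, q k = A *ᵥ p k := by
  intro k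
  induction k using Nat.strong_induction_on with
  | _ k ih =>
    match k with
    | 0 => exact hq0
    | m + 1 =>
      have hcol : colMat q (m + 1) = A * colMat p (m + 1) := by
        ext i c
        have hc := ih c c.isLt
        simp [colMat, Matrix.mul_apply, hc, Matrix.mulVec, dotProduct]
      rw [hq m, hcol, ← Matrix.mulVec_mulVec, ← Matrix.mulVec_sub, ← hp m]

lemma colMat_q_eq {n : ℕ} (A : Matrix (Fin n) (Fin n) ℝ) (p q : ℕ → Fin n → ℝ)
    (hqA : ∀ k, q k = A *ᵥ p k) (k : ℕ) :
    colMat q k = A * colMat p k := by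
  ext i c
  simp [colMat, Matrix.mul_apply, hqA c, Matrix.mulVec, dotProduct]

lemma L_props {n : ℕ} (A : Matrix (Fin n) (Fin n) ℝ)
    (hA : ∀ y : Fin n → ℝ, y ≠ 0 → 0 < y ⬝ᵥ A *ᵥ y)
    (p q r : ℕ → Fin n → ℝ)
    (hqA : ∀ k, q k = A *ᵥ p k)
    (hp : ∀ k, p (k + 1) = r (k + 1) - colMat p (k + 1) *ᵥ scgLam A p q r (k + 1)) :
    ∀ k, (∀ j, j < k → p j ≠ 0) →
      (∀ i j : Fin k, (i : ℕ) < (j : ℕ) → ((colMat p k)ᵀ * colMat q k) i j = 0) ∧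
      (∀ i : Fin k, 0 < ((colMat p k)ᵀ * colMat q k) i i) ∧
      IsUnit ((colMat p k)ᵀ * colMat q k) ∧
      (∀ i j : Fin k, (i : ℕ) < (j : ℕ) → p i ⬝ᵥ A *ᵥ p j = 0) := by
  intro k
  induction k using Nat.strong_induction_on with
  | _ k ih =>
    intro hne
    -- conjugacy for all levels j < k
    have conj : ∀ j : ℕ, j < k → ∀ i : ℕ, i < j → p i ⬝ᵥ A *ᵥ p j = 0 := by
      intro j hj i hij
      obtain ⟨m, rfl⟩ : ∃ m, j = m + 1 :=
        ⟨j - 1, (Nat.succ_pred_eq_of_pos (Nat.zero_lt_of_lt hij)).symm⟩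
      have hunit := (ih (m + 1) hj (fun a ha => hne a (ha.trans hj))).2.2.1
      set L := (colMat p (m + 1))ᵀ * colMat q (m + 1) with hLdef
      have hLlam : L *ᵥ scgLam A p q r (m + 1)
          = (colMat p (m + 1))ᵀ *ᵥ (A *ᵥ r (m + 1)) := by
        unfold scgLam
        rw [Matrix.mulVec_mulVec,
          Matrix.mul_nonsing_inv _ ((Matrix.isUnit_iff_isUnit_det _).mp hunit),
          Matrix.one_mulVec]
      have h1 : (colMat p (m + 1))ᵀ *ᵥ (A *ᵥ (colMat p (m + 1) *ᵥ scgLam A p q r (m + 1)))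
          = L *ᵥ scgLam A p q r (m + 1) := by
        rw [hLdef, colMat_q_eq A p q hqA, Matrix.mulVec_mulVec, Matrix.mulVec_mulVec,
          Matrix.mul_assoc]
      have zero : (colMat p (m + 1))ᵀ *ᵥ (A *ᵥ p (m + 1)) = 0 := by
        rw [hp m, Matrix.mulVec_sub, Matrix.mulVec_sub, h1, hLlam, sub_self]
      have := congrFun zero ⟨i, hij⟩
      rwa [colMatT_mulVec, Pi.zero_apply] at this
    have tri : ∀ i j : Fin k, (i : ℕ) < (j : ℕ) →
        ((colMat p k)ᵀ * colMat q k) i j = 0 := by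
      intro i j hij
      rw [L_entry, hqA]
      exact conj j j.isLt i hij
    have diag : ∀ i : Fin k, 0 < ((colMat p k)ᵀ * colMat q k) i i := by
      intro i
      rw [L_entry, hqA]
      exact hA (p i) (hne i i.isLt)
    have hunit : IsUnit ((colMat p k)ᵀ * colMat q k) := by
      rw [Matrix.isUnit_iff_isUnit_det]
      have hdet : ((colMat p k)ᵀ * colMat q k).det = ∏ i, ((colMat p k)ᵀ * colMat q k) i i := by
        apply Matrix.det_of_lowerTriangular
        intro i j hij
        exact tri i j hij
      rw [hdet]
      exact (Finset.prod_pos fun i _ => diag i).ne' |> isUnit_iff_ne_zero.mpr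
    exact ⟨tri, diag, hunit, fun i j hij => conj j j.isLt i hij⟩

/-- In the SCG iteration for positive definite `A`, if `p 0, …, p (k-1)` are
all nonzero, then `L_k = P_kᵀ Q_k` is lower triangular with positive diagonal,
hence nonsingular; consequently `p_iᵀ A p_j = 0` for `i < j`. -/
theorem scg_L_lower_triangular {n : ℕ} (A : Matrix (Fin n) (Fin n) ℝ)
    (b : Fin n → ℝ)
    (hA : ∀ y : Fin n → ℝ, y ≠ 0 → 0 < y ⬝ᵥ A *ᵥ y)
    (x p q r : ℕ → Fin n → ℝ)
    (hx0 : x 0 = 0) (hr0 : r 0 = b) (hp0 : p 0 = r 0) (hq0 : q 0 = A *ᵥ p 0)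
    (hx : ∀ k, x (k + 1) = x k + ((p k ⬝ᵥ r k) / (p k ⬝ᵥ q k)) • p k)
    (hr : ∀ k, r (k + 1) = r k - ((p k ⬝ᵥ r k) / (p k ⬝ᵥ q k)) • q k)
    (hp : ∀ k, p (k + 1) = r (k + 1) - colMat p (k + 1) *ᵥ scgLam A p q r (k + 1))
    (hq : ∀ k, q (k + 1) = A *ᵥ r (k + 1) - colMat q (k + 1) *ᵥ scgLam A p q r (k + 1))
    (k : ℕ) (hpne : ∀ j, j < k → p j ≠ 0) :
    (∀ i j : Fin k, (i : ℕ) < (j : ℕ) → ((colMat p k)ᵀ * colMat q k) i j = 0) ∧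
      (∀ i : Fin k, 0 < ((colMat p k)ᵀ * colMat q k) i i) ∧
      IsUnit ((colMat p k)ᵀ * colMat q k) ∧
      (∀ i j : Fin k, (i : ℕ) < (j : ℕ) → p i ⬝ᵥ A *ᵥ p j = 0) := by
  exact L_props A hA p q r (q_eq A p q r hq0 hp hq) hp k hpne
end
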